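/- arXiv:1907.05502 — 4 statements merged into one kernel-verified Lean document; each statement's English description precedes it below -/
import Mathlib

section
/- For every sequence a in the class S and every subset I ⊆ ℕ, one has d̄_a(I) ≤ B̄d(I). -/
open Filter Topology

/-- The weighted sum `∑_{j=0}^{N} a_j · 1_A(j)`. -/
noncomputable def wSum (a : ℕ → ℝ) (A : Set ℕ) (N : ℕ) : ℝ :=
  ∑ j ∈ Finset.range (N + 1), Set.indicator A a j

/-- The upper `a`-density `d̄_a(A)`. -/
noncomputable def upperDensWith (a : ℕ → ℝ) (A : Set ℕ) : ℝ :=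
  Filter.limsup (fun N => wSum a A N / ∑ j ∈ Finset.range (N + 1), a j) Filter.atTop

/-- The lower `a`-density `d_a(A)`. -/
noncomputable def lowerDensWith (a : ℕ → ℝ) (A : Set ℕ) : ℝ :=
  Filter.liminf (fun N => wSum a A N / ∑ j ∈ Finset.range (N + 1), a j) Filter.atTop

/-- The (unweighted) upper density `d̄(A)`. -/
noncomputable def upperDens (A : Set ℕ) : ℝ :=
  Filter.limsup
    (fun N : ℕ => (∑ j ∈ Finset.range (N + 1), Set.indicator A (fun _ => (1 : ℝ)) j) / (N + 1))
    Filter.atTop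

/-- The upper Banach density `B̄d(A) = lim_N b_N / N`, `b_N = limsup_k #(A ∩ [k+1, k+N])`
(the limit exists, so it coincides with the limsup used here). -/
noncomputable def upperBanachDens (A : Set ℕ) : ℝ :=
  Filter.limsup
    (fun N : ℕ =>
      (Filter.limsup
          (fun k : ℕ => ∑ j ∈ Finset.Icc (k + 1) (k + N), Set.indicator A (fun _ => (1 : ℝ)) j)
          Filter.atTop) / (N : ℝ))
    Filter.atTop

/-- `v_n(a) = a_n / ∑_{j=0}^{n-1} a_j`. -/
noncomputable def vSeq (a : ℕ → ℝ) (n : ℕ) : ℝ := a n / ∑ j ∈ Finset.range n, a j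

/-- The class `S` of weights: positive non-decreasing sequences tending to `+∞` such that
`(v_n(a))_{n ≥ 1}` is non-increasing and tends to `0`. -/
def memS (a : ℕ → ℝ) : Prop :=
  (∀ n, 0 < a n) ∧ Monotone a ∧ Filter.Tendsto a Filter.atTop Filter.atTop ∧
    (∀ m n : ℕ, 1 ≤ m → m ≤ n → vSeq a n ≤ vSeq a m) ∧
    Filter.Tendsto (vSeq a) Filter.atTop (nhds 0)

/-- `A - k = {n : n + k ∈ A}`. -/
def shiftSet (A : Set ℕ) (k : ℕ) : Set ℕ := {n : ℕ | n + k ∈ A}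

/-- A set of natural numbers has bounded gaps (is syndetic). -/
def Syndetic (K : Set ℕ) : Prop := ∃ m : ℕ, ∀ n : ℕ, (K ∩ Set.Icc n (n + m)).Nonempty

/-- The return set `N(x, U) = {n : T^n x ∈ U}`. -/
def retSet {X : Type*} [NormedAddCommGroup X] [NormedSpace ℂ X] (T : X →L[ℂ] X) (x : X)
    (U : Set X) : Set ℕ :=
  {n : ℕ | (T ^ n) x ∈ U}

/-- The set of hypercyclic vectors of `T`. -/
def HCSet {X : Type*} [NormedAddCommGroup X] [NormedSpace ℂ X] (T : X →L[ℂ] X) : Set X :=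
  {x : X | Dense (Set.range fun n : ℕ => (T ^ n) x)}

/-- The set of `U`-frequently hypercyclic vectors of `T`. -/
def UFHCSet {X : Type*} [NormedAddCommGroup X] [NormedSpace ℂ X] (T : X →L[ℂ] X) : Set X :=
  {x : X | ∀ U : Set X, IsOpen U → U.Nonempty → 0 < upperDens (retSet T x U)}

/-- The set of `U`-frequently hypercyclic vectors of `T` with respect to the weight `a`. -/
def UFHCaSet {X : Type*} [NormedAddCommGroup X] [NormedSpace ℂ X] (a : ℕ → ℝ)
    (T : X →L[ℂ] X) : Set X :=
  {x : X | ∀ U : Set X, IsOpen U → U.Nonempty → 0 < upperDensWith a (retSet T x U)}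

/-- The set of reiteratively hypercyclic vectors of `T`. -/
def RHCSet {X : Type*} [NormedAddCommGroup X] [NormedSpace ℂ X] (T : X →L[ℂ] X) : Set X :=
  {x : X | ∀ U : Set X, IsOpen U → U.Nonempty → 0 < upperBanachDens (retSet T x U)}

/-- `T` is `𝒜`-hypercyclic. -/
def AHC {X : Type*} [NormedAddCommGroup X] [NormedSpace ℂ X] (𝒜 : Set (Set ℕ))
    (T : X →L[ℂ] X) : Prop :=
  ∃ x : X, ∀ U : Set X, IsOpen U → U.Nonempty → retSet T x U ∈ 𝒜

/-- The `n`-fold product `T × ⋯ × T` acting diagonally on `Fin n → X`. -/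
noncomputable def nfold {X : Type*} [NormedAddCommGroup X] [NormedSpace ℂ X] (T : X →L[ℂ] X)
    (n : ℕ) : (Fin n → X) →L[ℂ] (Fin n → X) :=
  ContinuousLinearMap.pi fun i => T.comp (ContinuousLinearMap.proj i)

/-!
Fix `c > B̄d(I)`. Then for some window length `N` every window `[k+1, k+N]` with `k` large
meets `I` in at most `cN` points. For `a ∈ S` the weight is almost constant on such windows:
`a (n+1) ≤ (1 + v_n) a n`, so `a (k+N) ≤ r · a k` eventually for every `r > 1`. Cutting
`[0, M]` into a fixed head, consecutive windows and a last partial window, the windows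
contribute at most `r c` times their total weight, the head is negligible because
`∑ a_j → ∞`, and the last window because `a_M / ∑_{j ≤ M} a_j ≤ v_M → 0`. Hence
`d̄_a(I) ≤ r c`, and letting `r → 1`, `c → B̄d(I)` gives the claim.
-/

open Finset

-- `upperBanachDens I` unfolds to `limsup_N (limsup_k windowCount I N k) / N`.
noncomputable def windowCount (I : Set ℕ) (N k : ℕ) : ℝ :=
  ∑ j ∈ Icc (k + 1) (k + N), Set.indicator I (fun _ => (1 : ℝ)) j

lemma windowCount_eq_sum_Ioc (I : Set ℕ) (N k : ℕ) :
    windowCount I N k = ∑ j ∈ Ioc k (k + N), Set.indicator I (fun _ => (1 : ℝ)) j := by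
  rw [windowCount, Icc_add_one_left_eq_Ioc]

lemma windowCount_nonneg (I : Set ℕ) (N k : ℕ) : 0 ≤ windowCount I N k :=
  sum_nonneg fun _ _ => Set.indicator_nonneg (fun _ _ => zero_le_one) _

lemma windowCount_le (I : Set ℕ) (N k : ℕ) : windowCount I N k ≤ N := by
  calc windowCount I N k ≤ ∑ _j ∈ Icc (k + 1) (k + N), (1 : ℝ) :=
        sum_le_sum fun _ _ => Set.indicator_le_self' (fun _ _ => zero_le_one) _
    _ = N := by simp

lemma exists_windowCount_le_of_upperBanachDens_lt {I : Set ℕ} {c : ℝ}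
    (hc : upperBanachDens I < c) :
    ∃ N, 0 < N ∧ ∃ K, ∀ k ≥ K, windowCount I N k ≤ c * N := by
  have hbdd (N : ℕ) : IsBoundedUnder (· ≤ ·) atTop (windowCount I N) :=
    isBoundedUnder_of ⟨N, windowCount_le I N⟩
  have hb_le (N : ℕ) : limsup (windowCount I N) atTop ≤ N :=
    limsup_le_of_le (isCoboundedUnder_le_of_le atTop (windowCount_nonneg I N))
      (.of_forall (windowCount_le I N))
  have hratio_le (N : ℕ) : limsup (windowCount I N) atTop / N ≤ 1 :=
    div_le_one_of_le₀ (hb_le N) N.cast_nonneg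
  obtain ⟨N, hNc, hN⟩ :=
    ((eventually_lt_of_limsup_lt hc (isBoundedUnder_of ⟨1, hratio_le⟩)).and
      (eventually_gt_atTop 0)).exists
  have hbN : limsup (windowCount I N) atTop < c * N :=
    (div_lt_iff₀ (Nat.cast_pos.2 hN)).1 hNc
  obtain ⟨K, hK⟩ := eventually_atTop.1 (eventually_lt_of_limsup_lt hbN (hbdd N))
  exact ⟨N, hN, K, fun k hk => (hK k hk).le⟩

section WeightedSums

variable {a : ℕ → ℝ} {I : Set ℕ}

lemma sum_Ioc_le_mul_of_forall_block {f g : ℕ → ℝ} {C : ℝ} {K N : ℕ}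
    (hblock : ∀ q, ∑ j ∈ Ioc (K + q * N) (K + q * N + N), f j
      ≤ C * ∑ j ∈ Ioc (K + q * N) (K + q * N + N), g j) (q : ℕ) :
    ∑ j ∈ Ioc K (K + q * N), f j ≤ C * ∑ j ∈ Ioc K (K + q * N), g j := by
  induction q with
  | zero => simp
  | succ q ih =>
    have hsplit (h : ℕ → ℝ) : ∑ j ∈ Ioc K (K + (q + 1) * N), h j
        = ∑ j ∈ Ioc K (K + q * N), h j + ∑ j ∈ Ioc (K + q * N) (K + q * N + N), h j := by
      rw [sum_Ioc_consecutive h (by omega) (by omega)]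
      congr 2
      ring
    rw [hsplit f, hsplit g, mul_add]
    exact add_le_add ih (hblock q)

lemma sum_Ioc_indicator_le_of_windowCount_le (hnonneg : ∀ n, 0 ≤ a n) (hmono : Monotone a)
    {N k : ℕ} {c r : ℝ} (hc : 0 ≤ c) (hr : 0 ≤ r) (hwin : windowCount I N k ≤ c * N)
    (hreg : a (k + N) ≤ r * a k) :
    ∑ j ∈ Ioc k (k + N), I.indicator a j ≤ r * c * ∑ j ∈ Ioc k (k + N), a j := by
  have hind (j : ℕ) (hj : j ∈ Ioc k (k + N)) :
      I.indicator a j ≤ a (k + N) * I.indicator (fun _ => (1 : ℝ)) j := by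
    by_cases hjI : j ∈ I
    · simpa [hjI] using hmono (mem_Ioc.1 hj).2
    · simp [hjI]
  have hweight : (N : ℝ) * a k ≤ ∑ j ∈ Ioc k (k + N), a j := by
    simpa using card_nsmul_le_sum (Ioc k (k + N)) a (a k)
      fun j hj => hmono (mem_Ioc.1 hj).1.le
  calc ∑ j ∈ Ioc k (k + N), I.indicator a j
      ≤ a (k + N) * windowCount I N k := by
        rw [windowCount_eq_sum_Ioc, mul_sum]; exact sum_le_sum hind
    _ ≤ (r * a k) * (c * N) :=
        mul_le_mul hreg hwin (windowCount_nonneg I N k) (mul_nonneg hr (hnonneg k))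
    _ = r * c * (N * a k) := by ring
    _ ≤ r * c * ∑ j ∈ Ioc k (k + N), a j :=
        mul_le_mul_of_nonneg_left hweight (mul_nonneg hr hc)

lemma wSum_le_of_windowCount_le (hpos : ∀ n, 0 < a n) (hmono : Monotone a) {N K : ℕ}
    (hN : 0 < N) {c r : ℝ} (hr : 0 ≤ r) (hwin : ∀ k ≥ K, windowCount I N k ≤ c * N)
    (hreg : ∀ k ≥ K, a (k + N) ≤ r * a k) {M : ℕ} (hM : K ≤ M) :
    wSum a I M ≤ wSum a I K + r * c * ∑ j ∈ range (M + 1), a j + N * a M := by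
  have hc : 0 ≤ c := nonneg_of_mul_nonneg_left
    ((windowCount_nonneg I N K).trans (hwin K le_rfl)) (Nat.cast_pos.2 hN)
  have hnonneg (n : ℕ) : 0 ≤ a n := (hpos n).le
  set L := K + (M - K) / N * N
  have hKL : K ≤ L := Nat.le_add_right _ _
  have hLM : L ≤ M := by have := Nat.div_mul_le_self (M - K) N; omega
  have hML : M - L ≤ N := by have := Nat.lt_div_mul_add (a := M - K) hN; omega
  have hsplit (f : ℕ → ℝ) : ∑ j ∈ range (M + 1), f j
      = ∑ j ∈ range (K + 1), f j + ∑ j ∈ Ioc K L, f j + ∑ j ∈ Ioc L M, f j := by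
    rw [← sum_range_add_sum_Ico f (by omega : K + 1 ≤ M + 1), Ico_add_one_add_one_eq_Ioc,
      ← sum_Ioc_consecutive f hKL hLM, add_assoc]
  have hmiddle : ∑ j ∈ Ioc K L, I.indicator a j ≤ r * c * ∑ j ∈ range (M + 1), a j := by
    calc ∑ j ∈ Ioc K L, I.indicator a j ≤ r * c * ∑ j ∈ Ioc K L, a j :=
          sum_Ioc_le_mul_of_forall_block (fun q => sum_Ioc_indicator_le_of_windowCount_le
            hnonneg hmono hc hr (hwin _ (by omega)) (hreg _ (by omega))) _
      _ ≤ r * c * ∑ j ∈ range (M + 1), a j := by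
          refine mul_le_mul_of_nonneg_left (sum_le_sum_of_subset_of_nonneg ?_
            fun j _ _ => hnonneg j) (mul_nonneg hr hc)
          intro j hj
          have := (mem_Ioc.1 hj).2
          exact mem_range.2 (by omega)
  have hlast : ∑ j ∈ Ioc L M, I.indicator a j ≤ N * a M := by
    calc ∑ j ∈ Ioc L M, I.indicator a j ≤ #(Ioc L M) • a M :=
          sum_le_card_nsmul _ _ _ fun j hj =>
            (Set.indicator_le_self' (fun j _ => hnonneg j) j).trans (hmono (mem_Ioc.1 hj).2)
      _ ≤ N * a M := by
          rw [nsmul_eq_mul, Nat.card_Ioc]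
          exact mul_le_mul_of_nonneg_right (by exact_mod_cast hML) (hnonneg M)
  rw [wSum, wSum, hsplit]
  linarith

lemma upperDensWith_le_of_eventually_wSum_le (hnonneg : ∀ n, 0 ≤ a n)
    (hS : Tendsto (fun M => ∑ j ∈ range (M + 1), a j) atTop atTop)
    (hsmall : Tendsto (fun M => a M / ∑ j ∈ range (M + 1), a j) atTop (𝓝 0)) {C₀ C D : ℝ}
    (hle : ∀ᶠ M in atTop, wSum a I M ≤ C₀ + C * ∑ j ∈ range (M + 1), a j + D * a M) :
    upperDensWith a I ≤ C := by
  set S := fun M => ∑ j ∈ range (M + 1), a j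
  have hbound : Tendsto (fun M => C₀ / S M + C + D * (a M / S M)) atTop (𝓝 C) := by
    simpa using ((hS.const_div_atTop C₀).add_const C).add (hsmall.const_mul D)
  have hratio : (fun M => wSum a I M / S M) ≤ᶠ[atTop]
      fun M => C₀ / S M + C + D * (a M / S M) := by
    filter_upwards [hle, hS.eventually_gt_atTop 0] with M hM hSM
    rw [div_le_iff₀ hSM]
    calc wSum a I M ≤ C₀ + C * S M + D * a M := hM
      _ = (C₀ / S M + C + D * (a M / S M)) * S M := by field_simp
  have hcobdd : IsCoboundedUnder (· ≤ ·) atTop fun M => wSum a I M / S M :=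
    isCoboundedUnder_le_of_le atTop fun M =>
      div_nonneg (sum_nonneg fun j _ => Set.indicator_nonneg (fun j _ => hnonneg j) j)
        (sum_nonneg fun j _ => hnonneg j)
  calc upperDensWith a I ≤ limsup (fun M => C₀ / S M + C + D * (a M / S M)) atTop :=
        limsup_le_limsup hratio hcobdd hbound.isBoundedUnder_le
    _ = C := hbound.limsup_eq

end WeightedSums

section ClassS

variable {a : ℕ → ℝ}

lemma sum_range_pos (hpos : ∀ n, 0 < a n) {n : ℕ} (hn : 1 ≤ n) : 0 < ∑ j ∈ range n, a j :=
  sum_pos (fun j _ => hpos j) (nonempty_range_iff.2 (by omega))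

lemma apply_succ_le_of_vSeq_antitone (hpos : ∀ n, 0 < a n)
    (hv : ∀ m n : ℕ, 1 ≤ m → m ≤ n → vSeq a n ≤ vSeq a m) {n : ℕ} (hn : 1 ≤ n) :
    a (n + 1) ≤ (1 + vSeq a n) * a n := by
  have hSn := sum_range_pos hpos hn
  have hSn1 := sum_range_pos hpos (Nat.le_succ_of_le hn)
  calc a (n + 1) = vSeq a (n + 1) * ∑ j ∈ range (n + 1), a j := by
        rw [vSeq, div_mul_cancel₀ _ hSn1.ne']
    _ ≤ vSeq a n * ∑ j ∈ range (n + 1), a j :=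
        mul_le_mul_of_nonneg_right (hv n (n + 1) hn n.le_succ) hSn1.le
    _ = (1 + vSeq a n) * a n := by
        rw [sum_range_succ, vSeq]
        field_simp

lemma apply_add_le_of_vSeq_antitone (hpos : ∀ n, 0 < a n)
    (hv : ∀ m n : ℕ, 1 ≤ m → m ≤ n → vSeq a n ≤ vSeq a m) {n : ℕ} (hn : 1 ≤ n)
    (d : ℕ) :
    a (n + d) ≤ (1 + vSeq a n) ^ d * a n := by
  have hv0 : 0 ≤ vSeq a n := div_nonneg (hpos n).le (sum_range_pos hpos hn).le
  induction d with
  | zero => simp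
  | succ d ih =>
    calc a (n + (d + 1)) ≤ (1 + vSeq a (n + d)) * a (n + d) :=
          apply_succ_le_of_vSeq_antitone hpos hv (n := n + d) (by omega)
      _ ≤ (1 + vSeq a n) * ((1 + vSeq a n) ^ d * a n) :=
          mul_le_mul (by linarith [hv n (n + d) hn (by omega)]) ih (hpos _).le (by linarith)
      _ = (1 + vSeq a n) ^ (d + 1) * a n := by ring

lemma eventually_apply_add_le_mul (hpos : ∀ n, 0 < a n)
    (hv : ∀ m n : ℕ, 1 ≤ m → m ≤ n → vSeq a n ≤ vSeq a m)
    (hv0 : Tendsto (vSeq a) atTop (𝓝 0)) (N : ℕ) {r : ℝ} (hr : 1 < r) :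
    ∀ᶠ k in atTop, a (k + N) ≤ r * a k := by
  have hpow : Tendsto (fun n => (1 + vSeq a n) ^ N) atTop (𝓝 1) := by
    simpa using (hv0.const_add 1).pow N
  filter_upwards [hpow.eventually_le_const hr, eventually_ge_atTop 1] with k hk hk1
  exact (apply_add_le_of_vSeq_antitone hpos hv hk1 N).trans
    (mul_le_mul_of_nonneg_right hk (hpos k).le)

lemma tendsto_div_sum_range_of_vSeq (hpos : ∀ n, 0 < a n)
    (hv0 : Tendsto (vSeq a) atTop (𝓝 0)) :
    Tendsto (fun M => a M / ∑ j ∈ range (M + 1), a j) atTop (𝓝 0) := by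
  refine tendsto_of_tendsto_of_tendsto_of_le_of_le' tendsto_const_nhds hv0
    (.of_forall fun M => div_nonneg (hpos M).le (sum_range_pos hpos (by omega)).le) ?_
  filter_upwards [eventually_ge_atTop 1] with M hM
  exact div_le_div_of_nonneg_left (hpos M).le (sum_range_pos hpos hM)
    (sum_le_sum_of_subset_of_nonneg (range_subset_range.2 M.le_succ) fun j _ _ => (hpos j).le)

end ClassS

/-- For every `a ∈ S` and every `I ⊆ ℕ`, `d̄_a(I) ≤ B̄d(I)`. -/
theorem stmt_1 (a : ℕ → ℝ) (ha : memS a) (I : Set ℕ) :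
    upperDensWith a I ≤ upperBanachDens I := by
  obtain ⟨hpos, hmono, htop, hv, hv0⟩ := ha
  refine le_of_forall_gt_imp_ge_of_dense fun c hc => ?_
  obtain ⟨N, hN, K, hwin⟩ := exists_windowCount_le_of_upperBanachDens_lt hc
  have hS : Tendsto (fun M => ∑ j ∈ range (M + 1), a j) atTop atTop :=
    tendsto_atTop_mono (fun M => single_le_sum (fun j _ => (hpos j).le) (self_mem_range_succ M))
      htop
  have hbound : ∀ r > 1, upperDensWith a I ≤ r * c := by
    intro r hr
    obtain ⟨K', hK'⟩ := eventually_atTop.1 (eventually_apply_add_le_mul hpos hv hv0 N hr)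
    refine upperDensWith_le_of_eventually_wSum_le (C₀ := wSum a I (max K K')) (D := N)
      (fun n => (hpos n).le) hS (tendsto_div_sum_range_of_vSeq hpos hv0) ?_
    filter_upwards [eventually_ge_atTop (max K K')] with M hM
    exact wSum_le_of_windowCount_le hpos hmono hN (by linarith)
      (fun k hk => hwin k (le_of_max_le_left hk)) (fun k hk => hK' k (le_of_max_le_right hk)) hM
  have hlim : Tendsto (fun r => r * c) (𝓝[>] 1) (𝓝 c) :=
    ((continuous_mul_const c).tendsto' 1 c (one_mul c)).mono_left nhdsWithin_le_nhds
  exact ge_of_tendsto hlim (eventually_nhdsWithin_of_forall hbound)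
end

section
/- For every sequence a in the class S, there exists an infinite set A ⊆ ℕ such that B̄d(A) = 1 and d̄_a(A) = 0. -/
open Filter Topology

/-!
Put `S n = a 0 + ⋯ + a (n - 1)` and `u j = a j / S (j + 1)`; then `u j ≤ v_j(a) → 0`. Placing a
block of `k + 1` consecutive integers so far out that `u ≤ 2⁻ᵏ / (k + 1)` on it, the union `A` of
the blocks is thick, hence `B̄d(A) = 1`, while `∑_{j ∈ A} u j ≤ ∑ 2⁻ᵏ < ∞`. Since
`1_A(j) a j = 1_A(j) u j · S (j + 1)` and `S → ∞`, Kronecker's lemma gives `d̄_a(A) = 0`.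
-/

open Finset

theorem tendsto_sum_range_succ_mul_div_of_summable {f w : ℕ → ℝ} (hf : 0 ≤ f)
    (hsum : Summable f) (hw0 : 0 ≤ w) (hw : Monotone w) (hw_top : Tendsto w atTop atTop) :
    Tendsto (fun n => (∑ i ∈ range (n + 1), f i * w i) / w n) atTop (𝓝 0) := by
  refine tendsto_order.2 ⟨fun ε hε => Eventually.of_forall fun n =>
    hε.trans_le (div_nonneg (sum_nonneg fun i _ => mul_nonneg (hf i) (hw0 i)) (hw0 n)), ?_⟩
  intro ε hε
  have htail : Tendsto (fun J => ∑' i, f i - ∑ i ∈ range J, f i) atTop (𝓝 0) := by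
    simpa using (tendsto_const_nhds (x := ∑' i, f i)).sub hsum.tendsto_sum_tsum_nat
  obtain ⟨J, hJ⟩ := (htail.eventually (gt_mem_nhds (half_pos hε))).exists
  set C := ∑ i ∈ range J, f i * w i
  have hC : ∀ᶠ n in atTop, C / w n < ε / 2 :=
    (tendsto_const_nhds.div_atTop hw_top).eventually (gt_mem_nhds (half_pos hε))
  filter_upwards [hC, eventually_ge_atTop J, hw_top.eventually_gt_atTop 0] with n hCn hJn hwn
  have hIco :
      ∑ i ∈ Ico J (n + 1), f i * w i ≤ w n * (∑' i, f i - ∑ i ∈ range J, f i) := by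
    calc ∑ i ∈ Ico J (n + 1), f i * w i ≤ ∑ i ∈ Ico J (n + 1), f i * w n :=
          sum_le_sum fun i hi =>
            mul_le_mul_of_nonneg_left (hw (Nat.lt_succ_iff.1 (mem_Ico.1 hi).2)) (hf i)
      _ = w n * (∑ i ∈ range (n + 1), f i - ∑ i ∈ range J, f i) := by
          rw [← sum_range_add_sum_Ico f (by omega : J ≤ n + 1), ← sum_mul]; ring
      _ ≤ w n * (∑' i, f i - ∑ i ∈ range J, f i) := by
          gcongr; exact hsum.sum_le_tsum _ fun i _ => hf i
  rw [← sum_range_add_sum_Ico _ (by omega : J ≤ n + 1), add_div]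
  calc C / w n + (∑ i ∈ Ico J (n + 1), f i * w i) / w n
      ≤ C / w n + (∑' i, f i - ∑ i ∈ range J, f i) := by
        gcongr; rwa [div_le_iff₀' hwn]
    _ < ε := by linarith

theorem upperDensWith_eq_zero_of_summable {a : ℕ → ℝ} {A : Set ℕ} (ha : 0 ≤ a)
    (hS : Tendsto (fun n => ∑ j ∈ range n, a j) atTop atTop)
    (hA : Summable (A.indicator fun j => a j / ∑ i ∈ range (j + 1), a i)) :
    upperDensWith a A = 0 := by
  set w := fun n => ∑ i ∈ range (n + 1), a i
  have hw0 : 0 ≤ w := fun n => sum_nonneg fun i _ => ha i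
  have hw : Monotone w := fun m n hmn =>
    sum_le_sum_of_subset_of_nonneg (range_subset_range.2 (by omega)) fun i _ _ => ha i
  have hwSum_eq : ∀ N,
      wSum a A N = ∑ j ∈ range (N + 1), A.indicator (fun j => a j / w j) j * w j := by
    intro N
    refine sum_congr rfl fun j _ => ?_
    by_cases hj : j ∈ A
    · simp only [Set.indicator_of_mem hj]
      refine (div_mul_cancel_of_imp fun hwj => le_antisymm ?_ (ha j)).symm
      exact hwj ▸ single_le_sum (fun i _ => ha i) (self_mem_range_succ j)
    · simp [Set.indicator_of_notMem hj]
  refine Tendsto.limsup_eq ?_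
  simp only [hwSum_eq]
  exact tendsto_sum_range_succ_mul_div_of_summable
    (Set.indicator_nonneg fun j _ => div_nonneg (ha j) (hw0 j)) hA hw0 hw
    ((tendsto_add_atTop_iff_nat 1).2 hS)

-- Equivalent to containing arbitrarily long intervals; the bound `K` is what `limsup` needs.
def IsThick (A : Set ℕ) : Prop := ∀ L K : ℕ, ∃ k ≥ K, Set.Icc (k + 1) (k + L) ⊆ A

theorem IsThick.infinite {A : Set ℕ} (hA : IsThick A) : A.Infinite := by
  refine Set.infinite_of_not_bddAbove fun ⟨M, hM⟩ => ?_
  obtain ⟨k, hk, hsub⟩ := hA 1 M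
  have := hM (hsub ⟨le_rfl, le_rfl⟩)
  omega

theorem IsThick.limsup_card_Icc {A : Set ℕ} (hA : IsThick A) (N : ℕ) :
    limsup (fun k : ℕ => ∑ j ∈ Icc (k + 1) (k + N), A.indicator (fun _ => (1 : ℝ)) j)
      atTop = N := by
  set c := fun k : ℕ => ∑ j ∈ Icc (k + 1) (k + N), A.indicator (fun _ => (1 : ℝ)) j
  have hc0 : ∀ k, 0 ≤ c k := fun k =>
    sum_nonneg fun j _ => Set.indicator_nonneg (fun _ _ => zero_le_one) j
  have hcN : ∀ k, c k ≤ N := fun k => by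
    calc c k ≤ ∑ j ∈ Icc (k + 1) (k + N), (1 : ℝ) :=
          sum_le_sum fun j _ => Set.indicator_le_self' (fun _ _ => zero_le_one) j
      _ = N := by simp
  have hfreq : ∃ᶠ k in atTop, (N : ℝ) ≤ c k := by
    refine frequently_atTop.2 fun K => ?_
    obtain ⟨k, hk, hsub⟩ := hA N K
    refine ⟨k, hk, le_of_eq ?_⟩
    calc (N : ℝ) = ∑ j ∈ Icc (k + 1) (k + N), (1 : ℝ) := by simp
      _ = c k := sum_congr rfl fun j hj =>
        (Set.indicator_of_mem (hsub (by simpa using hj)) fun _ => (1 : ℝ)).symm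
  exact le_antisymm (limsup_le_of_le (isCoboundedUnder_le_of_le atTop hc0) (.of_forall hcN))
    (le_limsup_of_frequently_le hfreq (isBoundedUnder_of ⟨N, hcN⟩))

theorem IsThick.upperBanachDens_eq_one {A : Set ℕ} (hA : IsThick A) : upperBanachDens A = 1 := by
  have hev : (fun N : ℕ => limsup (fun k : ℕ => ∑ j ∈ Icc (k + 1) (k + N),
      A.indicator (fun _ => (1 : ℝ)) j) atTop / N) =ᶠ[atTop] fun _ => 1 := by
    filter_upwards [eventually_ge_atTop 1] with N hN
    rw [hA.limsup_card_Icc, div_self (by positivity)]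
  rw [upperBanachDens, limsup_congr hev, limsup_const]

theorem exists_isThick_summable_indicator {u : ℕ → ℝ} (hu0 : 0 ≤ u)
    (hu : Tendsto u atTop (𝓝 0)) : ∃ A : Set ℕ, IsThick A ∧ Summable (A.indicator u) := by
  have hthreshold : ∀ k : ℕ, ∃ b ≥ k, ∀ m ≥ b, u m ≤ (1 / 2) ^ k / (k + 1) := by
    intro k
    have hpos : (0 : ℝ) < (1 / 2) ^ k / (k + 1) := by positivity
    obtain ⟨B, hB⟩ := eventually_atTop.1 (hu.eventually (ge_mem_nhds hpos))
    exact ⟨max B k, le_max_right _ _, fun m hm => hB m (le_of_max_le_left hm)⟩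
  choose b hbk hb using hthreshold
  set I : ℕ → Finset ℕ := fun k => Icc (b k) (b k + k)
  have hI : ∀ k, ∑ j ∈ I k, u j ≤ (1 / 2) ^ k := fun k => by
    calc ∑ j ∈ I k, u j ≤ #(I k) • ((1 / 2) ^ k / (k + 1)) :=
          sum_le_card_nsmul _ _ _ fun j hj => hb k j (mem_Icc.1 hj).1
      _ = (1 / 2) ^ k := by
          rw [Nat.card_Icc, nsmul_eq_mul, show b k + k + 1 - b k = k + 1 by omega]
          push_cast
          field_simp
  set A := ⋃ k, (I k : Set ℕ)
  have hA : ∀ n, ∀ j ∈ range n,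
      A.indicator u j ≤ ∑ k ∈ range n, (I k : Set ℕ).indicator u j := by
    intro n j hj
    by_cases hjA : j ∈ A
    · obtain ⟨k, hk⟩ := Set.mem_iUnion.1 hjA
      have hkn : k < n := by
        have hkj := (mem_Icc.1 (mem_coe.1 hk)).1
        have hjn := mem_range.1 hj
        have := hbk k
        omega
      rw [Set.indicator_of_mem hjA, ← Set.indicator_of_mem hk u]
      exact single_le_sum (f := fun k => (I k : Set ℕ).indicator u j)
        (fun k _ => Set.indicator_nonneg (fun i _ => hu0 i) j) (mem_range.2 hkn)
    · rw [Set.indicator_of_notMem hjA]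
      exact sum_nonneg fun k _ => Set.indicator_nonneg (fun i _ => hu0 i) j
  refine ⟨A, fun L K => ⟨b (max L K), (le_max_right L K).trans (hbk _), fun j hj => ?_⟩, ?_⟩
  · obtain ⟨hj₁, hj₂⟩ := hj
    exact Set.mem_iUnion.2 ⟨max L K, mem_coe.2 (mem_Icc.2 ⟨by omega, by omega⟩)⟩
  refine summable_of_sum_range_le (c := 2) (Set.indicator_nonneg fun i _ => hu0 i) fun n => ?_
  calc ∑ j ∈ range n, A.indicator u j
      ≤ ∑ j ∈ range n, ∑ k ∈ range n, (I k : Set ℕ).indicator u j := sum_le_sum (hA n)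
    _ = ∑ k ∈ range n, ∑ j ∈ range n, (I k : Set ℕ).indicator u j := sum_comm
    _ ≤ ∑ k ∈ range n, ∑ j ∈ range n ∪ I k, (I k : Set ℕ).indicator u j :=
        sum_le_sum fun k _ => sum_le_sum_of_subset_of_nonneg subset_union_left
          fun j _ _ => Set.indicator_nonneg (fun i _ => hu0 i) j
    _ = ∑ k ∈ range n, ∑ j ∈ I k, u j :=
        sum_congr rfl fun k _ => sum_indicator_subset u subset_union_right
    _ ≤ ∑ k ∈ range n, (1 / 2 : ℝ) ^ k := sum_le_sum fun k _ => hI k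
    _ ≤ 2 := sum_geometric_two_le n

/-- For every `a ∈ S` there is an infinite set `A ⊆ ℕ` with `B̄d(A) = 1` and `d̄_a(A) = 0`. -/
theorem stmt_3 (a : ℕ → ℝ) (ha : memS a) :
    ∃ A : Set ℕ, A.Infinite ∧ upperBanachDens A = 1 ∧ upperDensWith a A = 0 := by
  obtain ⟨hpos, -, hatop, -, hv0⟩ := ha
  have ha0 : 0 ≤ a := fun j => (hpos j).le
  have hS : Tendsto (fun n => ∑ j ∈ range n, a j) atTop atTop :=
    (tendsto_add_atTop_iff_nat 1).1 <| tendsto_atTop_mono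
      (fun n => single_le_sum (fun j _ => ha0 j) (self_mem_range_succ n)) hatop
  have hu0 : 0 ≤ fun j => a j / ∑ i ∈ range (j + 1), a i :=
    fun j => div_nonneg (ha0 j) (sum_nonneg fun i _ => ha0 i)
  have hle : ∀ j ≥ 1, a j / ∑ i ∈ range (j + 1), a i ≤ vSeq a j := fun j hj =>
    div_le_div_of_nonneg_left (ha0 j)
      (sum_pos (fun i _ => hpos i) (nonempty_range_iff.2 (by omega)))
      (sum_le_sum_of_subset_of_nonneg (range_subset_range.2 (by omega)) fun i _ _ => ha0 i)
  have hu : Tendsto (fun j => a j / ∑ i ∈ range (j + 1), a i) atTop (𝓝 0) :=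
    squeeze_zero' (.of_forall hu0) (eventually_atTop.2 ⟨1, hle⟩) hv0
  obtain ⟨A, hthick, hsum⟩ := exists_isThick_summable_indicator hu0 hu
  exact ⟨A, hthick.infinite, hthick.upperBanachDens_eq_one,
    upperDensWith_eq_zero_of_summable ha0 hS hsum⟩
end

section
/- Let T be a bounded operator on a separable infinite-dimensional Banach space X. Then T is U-frequently hypercyclic if and only if T is U-frequently hypercyclic with respect to each a in the class S; moreover UFHC(T) = ∩_{a∈S} UFHC_a(T). -/
open Filter Topology

/-
Summation by parts gives `d̄_a ≤ d̄_b` whenever `a_n / b_n` is non-increasing and `∑ a_n = ∞`: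
if `∑_{j ≤ n} 1_A(j) b_j ≤ γ ∑_{j ≤ n} b_j + K` for all `n`, weighting the increments by the
non-increasing factors `a_j / b_j ≥ 0` keeps the inequality, with `K` replaced by `K a_0 / b_0`.
Taking `a = 1` and `b` non-decreasing yields `d̄ ≤ d̄_b`, so `UFHC(T) ⊆ UFHC_b(T)` for every
`b ∈ S`. Conversely, for the weight `b_n = n + 1 ∈ S` one has
`∑_{j ≤ N} 1_A(j) (j + 1) ≤ (N + 1) #(A ∩ [0, N])` while `∑_{j ≤ N} (j + 1) = (N + 1)(N + 2)/2`,
whence `d̄_b ≤ 2 d̄`.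
-/

open Finset

noncomputable def densRatio (a : ℕ → ℝ) (A : Set ℕ) (N : ℕ) : ℝ :=
  wSum a A N / ∑ j ∈ range (N + 1), a j

section Density

variable {a : ℕ → ℝ} {A : Set ℕ}

theorem upperDensWith_eq_limsup_densRatio (a : ℕ → ℝ) (A : Set ℕ) :
    upperDensWith a A = limsup (densRatio a A) atTop := rfl

theorem upperDens_eq_upperDensWith_one (A : Set ℕ) :
    upperDens A = upperDensWith (fun _ => 1) A := by
  simp only [upperDens, upperDensWith, wSum, sum_const, card_range, nsmul_eq_mul, mul_one,
    Nat.cast_add, Nat.cast_one]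

theorem wSum_nonneg (ha : ∀ n, 0 ≤ a n) (N : ℕ) : 0 ≤ wSum a A N :=
  sum_nonneg fun j _ => Set.indicator_nonneg (fun j _ => ha j) j

theorem wSum_le_sum (ha : ∀ n, 0 ≤ a n) (N : ℕ) : wSum a A N ≤ ∑ j ∈ range (N + 1), a j :=
  sum_le_sum fun j _ => Set.indicator_le_self' (fun j _ => ha j) j

theorem densRatio_nonneg (ha : ∀ n, 0 ≤ a n) (N : ℕ) : 0 ≤ densRatio a A N :=
  div_nonneg (wSum_nonneg ha N) (sum_nonneg fun j _ => ha j)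

theorem densRatio_le_one (ha : ∀ n, 0 ≤ a n) (N : ℕ) : densRatio a A N ≤ 1 :=
  div_le_one_of_le₀ (wSum_le_sum ha N) (sum_nonneg fun j _ => ha j)

theorem isBoundedUnder_densRatio (ha : ∀ n, 0 ≤ a n) :
    IsBoundedUnder (· ≤ ·) atTop (densRatio a A) :=
  isBoundedUnder_of ⟨1, densRatio_le_one ha⟩

theorem isCoboundedUnder_densRatio (ha : ∀ n, 0 ≤ a n) :
    IsCoboundedUnder (· ≤ ·) atTop (densRatio a A) :=
  isCoboundedUnder_le_of_le atTop (densRatio_nonneg ha)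

theorem upperDensWith_nonneg (ha : ∀ n, 0 ≤ a n) : 0 ≤ upperDensWith a A :=
  le_limsup_of_frequently_le (Frequently.of_forall (densRatio_nonneg ha))
    (isBoundedUnder_densRatio ha)

end Density

/-- Abel's inequality. -/
theorem sum_range_mul_le_of_antitone {c d : ℕ → ℝ} {K : ℝ} (hc : Antitone c)
    (hc0 : ∀ n, 0 ≤ c n) (hd : ∀ n, ∑ j ∈ range (n + 1), d j ≤ K) (N : ℕ) :
    ∑ j ∈ range (N + 1), c j * d j ≤ c 0 * K := by
  have h_by_parts : ∀ N, ∑ j ∈ range (N + 1), c j * d j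
      ≤ c N * ∑ j ∈ range (N + 1), d j + (c 0 - c N) * K := by
    intro N
    induction N with
    | zero => simp
    | succ n ih =>
      rw [sum_range_succ (fun j => c j * d j), sum_range_succ d]
      nlinarith [hc n.le_succ, hd n]
  nlinarith [h_by_parts N, hd N, hc0 N]

theorem exists_wSum_le_of_upperDensWith_lt {b : ℕ → ℝ} {A : Set ℕ} {γ : ℝ}
    (hb : ∀ n, 0 < b n) (hγ : upperDensWith b A < γ) :
    ∃ K, ∀ n, wSum b A n ≤ γ * ∑ j ∈ range (n + 1), b j + K := by
  have hb0 : ∀ n, 0 ≤ b n := fun n => (hb n).le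
  have hγ0 : 0 ≤ γ := (upperDensWith_nonneg hb0).trans hγ.le
  obtain ⟨n₀, hn₀⟩ :=
    eventually_atTop.1 (eventually_lt_of_limsup_lt hγ (isBoundedUnder_densRatio (A := A) hb0))
  refine ⟨∑ j ∈ range (n₀ + 1), b j, fun n => ?_⟩
  rcases le_total n₀ n with h | h
  · have := hn₀ n h
    rw [div_lt_iff₀ (sum_pos (fun j _ => hb j) nonempty_range_add_one)] at this
    linarith [sum_nonneg fun j (_ : j ∈ range (n₀ + 1)) => hb0 j]
  · have : ∑ j ∈ range (n + 1), b j ≤ ∑ j ∈ range (n₀ + 1), b j :=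
      sum_le_sum_of_subset_of_nonneg (range_subset_range.2 (by omega)) fun j _ _ => hb0 j
    nlinarith [wSum_le_sum (A := A) hb0 n, sum_nonneg fun j (_ : j ∈ range (n + 1)) => hb0 j]

theorem wSum_le_of_antitone_div {a b : ℕ → ℝ} {A : Set ℕ} {γ K : ℝ} (ha : ∀ n, 0 ≤ a n)
    (hb : ∀ n, 0 < b n) (hab : Antitone fun n => a n / b n)
    (hWb : ∀ n, wSum b A n ≤ γ * ∑ j ∈ range (n + 1), b j + K) (N : ℕ) :
    wSum a A N ≤ γ * ∑ j ∈ range (N + 1), a j + a 0 / b 0 * K := by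
  have hsplit : ∀ j, A.indicator a j - γ * a j = a j / b j * (A.indicator b j - γ * b j) := by
    intro j
    have := (hb j).ne'
    by_cases hj : j ∈ A <;> simp [hj] <;> field_simp
  have := sum_range_mul_le_of_antitone hab (fun n => div_nonneg (ha n) (hb n).le)
    (d := fun j => A.indicator b j - γ * b j) (fun n => by
      simpa only [wSum, sum_sub_distrib, ← mul_sum, sub_le_iff_le_add'] using hWb n) N
  simp only [← hsplit, sum_sub_distrib, ← mul_sum] at this
  rw [wSum]
  linarith

theorem upperDensWith_le_of_antitone_div {a b : ℕ → ℝ} (ha : ∀ n, 0 < a n) (hb : ∀ n, 0 < b n)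
    (hab : Antitone fun n => a n / b n)
    (ha_sum : Tendsto (fun N => ∑ j ∈ range (N + 1), a j) atTop atTop) (A : Set ℕ) :
    upperDensWith a A ≤ upperDensWith b A := by
  refine le_of_forall_gt_imp_ge_of_dense fun γ hγ => ?_
  obtain ⟨K, hWb⟩ := exists_wSum_le_of_upperDensWith_lt hb hγ
  set C := a 0 / b 0 * K
  have hlim : Tendsto (fun N => γ + C / ∑ j ∈ range (N + 1), a j) atTop (𝓝 γ) := by
    simpa using tendsto_const_nhds.add (tendsto_const_nhds.div_atTop ha_sum)
  calc upperDensWith a A ≤ limsup (fun N => γ + C / ∑ j ∈ range (N + 1), a j) atTop := by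
        refine limsup_le_limsup (Eventually.of_forall fun N => ?_)
          (isCoboundedUnder_densRatio fun n => (ha n).le) hlim.isBoundedUnder_le
        have hS := sum_pos (fun j _ => ha j) (nonempty_range_add_one (n := N))
        show wSum a A N / _ ≤ _
        rw [div_le_iff₀ hS, add_mul, div_mul_cancel₀ _ hS.ne']
        linarith [wSum_le_of_antitone_div (fun n => (ha n).le) hb hab hWb N]
    _ = γ := hlim.limsup_eq

theorem upperDens_le_upperDensWith {b : ℕ → ℝ} (hb : ∀ n, 0 < b n) (hbm : Monotone b)
    (A : Set ℕ) : upperDens A ≤ upperDensWith b A := by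
  rw [upperDens_eq_upperDensWith_one]
  refine upperDensWith_le_of_antitone_div (fun _ => one_pos) hb
    (fun m n hmn => one_div_le_one_div_of_le (hb m) (hbm hmn)) ?_ A
  simpa using tendsto_natCast_atTop_atTop.atTop_add tendsto_const_nhds

theorem upperDensWith_le_mul_upperDens {b : ℕ → ℝ} {C : ℝ} (hC : 0 ≤ C) (hb : ∀ n, 0 < b n)
    (hbm : Monotone b) (hbC : ∀ N : ℕ, b N * (N + 1) ≤ C * ∑ j ∈ range (N + 1), b j)
    (A : Set ℕ) : upperDensWith b A ≤ C * upperDens A := by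
  have h1 : ∀ n : ℕ, (0 : ℝ) ≤ 1 := fun _ => zero_le_one
  rw [upperDens_eq_upperDensWith_one, upperDensWith_eq_limsup_densRatio,
    upperDensWith_eq_limsup_densRatio, (monotone_mul_left_of_nonneg hC).map_limsup_of_continuousAt _
      (continuous_const_mul C).continuousAt (isBoundedUnder_densRatio h1)
      (isCoboundedUnder_densRatio h1)]
  refine limsup_le_limsup (Eventually.of_forall fun N => ?_)
    (isCoboundedUnder_densRatio fun n => (hb n).le)
    (isBoundedUnder_of ⟨C, fun N => mul_le_of_le_one_right hC (densRatio_le_one h1 N)⟩)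
  have hW : wSum b A N ≤ b N * wSum (fun _ => 1) A N := by
    rw [wSum, wSum, mul_sum]
    refine sum_le_sum fun j hj => ?_
    by_cases hjA : j ∈ A
    · simpa [hjA] using hbm (Nat.lt_succ_iff.1 (mem_range.1 hj))
    · simp [hjA]
  have hS := sum_pos (fun j _ => hb j) (nonempty_range_add_one (n := N))
  have hW1 := wSum_nonneg (A := A) h1 N
  simp only [densRatio, Function.comp_apply, sum_const, card_range, nsmul_eq_mul, mul_one,
    Nat.cast_add, Nat.cast_one]
  rw [div_le_iff₀ hS, mul_div_assoc', div_mul_eq_mul_div, le_div_iff₀ (by positivity)]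
  nlinarith [hbC N]

theorem sum_range_natCast_add_one (n : ℕ) :
    ∑ j ∈ range n, ((j : ℝ) + 1) = n * (n + 1) / 2 := by
  induction n with
  | zero => simp
  | succ k ih => rw [sum_range_succ, ih]; push_cast; ring

theorem memS_natCast_add_one : memS fun n : ℕ => (n : ℝ) + 1 := by
  have hv : ∀ k : ℕ, 1 ≤ k → vSeq (fun n : ℕ => (n : ℝ) + 1) k = 2 / k := by
    intro k hk
    have hk0 : (0 : ℝ) < k := by exact_mod_cast hk
    rw [vSeq, sum_range_natCast_add_one, div_eq_div_iff (by positivity) hk0.ne']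
    ring
  refine ⟨fun n => by positivity, fun m n hmn => by simpa using hmn, ?_, fun m n hm hmn => ?_, ?_⟩
  · exact tendsto_natCast_atTop_atTop.atTop_add tendsto_const_nhds
  · rw [hv m hm, hv n (hm.trans hmn)]
    gcongr
  · refine (tendsto_const_div_atTop_nhds_zero_nat 2).congr' ?_
    filter_upwards [eventually_ge_atTop 1] with k hk using (hv k hk).symm

theorem upperDensWith_natCast_add_one_le (A : Set ℕ) :
    upperDensWith (fun n : ℕ => (n : ℝ) + 1) A ≤ 2 * upperDens A := by
  refine upperDensWith_le_mul_upperDens zero_le_two (fun n => by positivity)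
    (fun m n hmn => by simpa using hmn) (fun N => ?_) A
  rw [← Nat.cast_succ, sum_range_natCast_add_one (N + 1)]
  push_cast
  nlinarith

section Hypercyclicity

variable {X : Type*} [NormedAddCommGroup X] [NormedSpace ℂ X] (T : X →L[ℂ] X)

theorem UFHCSet_subset_UFHCaSet {a : ℕ → ℝ} (ha : ∀ n, 0 < a n) (ham : Monotone a) :
    UFHCSet T ⊆ UFHCaSet a T :=
  fun _ hx U hU hne => (hx U hU hne).trans_le (upperDens_le_upperDensWith ha ham _)

theorem UFHCaSet_natCast_add_one_subset :
    UFHCaSet (fun n : ℕ => (n : ℝ) + 1) T ⊆ UFHCSet T :=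
  fun _ hx U hU hne => pos_of_mul_pos_right
    ((hx U hU hne).trans_le (upperDensWith_natCast_add_one_le _)) zero_le_two

end Hypercyclicity

theorem stmt_4_general {X : Type*} [NormedAddCommGroup X] [NormedSpace ℂ X] (T : X →L[ℂ] X) :
    ((UFHCSet T).Nonempty ↔ ∀ a : ℕ → ℝ, memS a → (UFHCaSet a T).Nonempty) ∧
      UFHCSet T = ⋂ a ∈ {a : ℕ → ℝ | memS a}, UFHCaSet a T := by
  refine ⟨⟨fun ⟨x, hx⟩ a ha => ⟨x, UFHCSet_subset_UFHCaSet T ha.1 ha.2.1 hx⟩, fun h => ?_⟩, ?_⟩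
  · exact (h _ memS_natCast_add_one).mono (UFHCaSet_natCast_add_one_subset T)
  · exact (Set.subset_iInter₂ fun a ha => UFHCSet_subset_UFHCaSet T ha.1 ha.2.1).antisymm
      ((Set.iInter₂_subset _ memS_natCast_add_one).trans (UFHCaSet_natCast_add_one_subset T))

/-- `T` is `U`-frequently hypercyclic iff it is `U`-frequently hypercyclic with respect to
every `a ∈ S`; moreover `UFHC(T) = ⋂_{a ∈ S} UFHC_a(T)`. -/
theorem stmt_4 {X : Type*} [NormedAddCommGroup X] [NormedSpace ℂ X] [CompleteSpace X]
    [TopologicalSpace.SeparableSpace X] (hX : ¬FiniteDimensional ℂ X) (T : X →L[ℂ] X) :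
    ((UFHCSet T).Nonempty ↔ ∀ a : ℕ → ℝ, memS a → (UFHCaSet a T).Nonempty) ∧
      UFHCSet T = ⋂ a ∈ {a : ℕ → ℝ | memS a}, UFHCaSet a T :=
  stmt_4_general T
end

section
/- Let A be an upper Furstenberg family, with decomposition A = ∪_{δ∈D} A_δ, satisfying: (1) for every δ' ∈ D there exists δ ∈ D such that for all k ≥ 0 and all A ∈ A_{δ'}, one has A − k ∈ A_δ; (2) for every A ∈ A there exists δ ∈ D such that {k ≥ 0 : A ∩ (A − k) ∈ A_δ} has bounded gaps. If a bounded operator T on a separable infinite-dimensional Banach space X is A-hypercyclic, then T × T is A-hypercyclic on X × X. -/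
open Filter Topology

/-!
Let `x` be an `𝒜`-hypercyclic vector. If `s ∈ N(U, V)`, condition (2) applied to
`N(x, U ∩ T⁻ˢ V)` shows that the set of `r` with `N(x, U) ∩ (N(x, V) - r) ∈ 𝒜_δ` is syndetic for
one `δ`. In particular every `N(U, V)` is syndetic, i.e. `T` is topologically ergodic; by linearity
this makes `T` weakly mixing, so every `N(O₁, O₂)` is thick and meets that syndetic set in some `r`.
Picking `T^p x ∈ O₁ ∩ T⁻ʳ O₂`, the return set of `(T^p x, T^(p+r) x)` to `U × V` is the shift by
`p` of `N(x, U) ∩ (N(x, V) - r)`, so by condition (1) it lies in an `𝒜_δ'` that does not depend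
on `O₁, O₂`. Since each `𝒜_{δ',μ}` is finitely determined, a Baire category argument in `X × X`
then produces an `𝒜`-hypercyclic vector for `T × T`.
-/

open Set Metric TopologicalSpace

def Thick (S : Set ℕ) : Prop := ∀ L : ℕ, ∃ n : ℕ, Icc n (n + L) ⊆ S

theorem Syndetic.mono {K K' : Set ℕ} (hK : Syndetic K) (hKK' : K ⊆ K') : Syndetic K' := by
  obtain ⟨m, hm⟩ := hK
  exact ⟨m, fun n => (hm n).mono (inter_subset_inter_left _ hKK')⟩

theorem Syndetic.nonempty {K : Set ℕ} (hK : Syndetic K) : K.Nonempty := by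
  obtain ⟨m, hm⟩ := hK
  exact (hm 0).mono inter_subset_left

theorem Syndetic.image_add {K : Set ℕ} (hK : Syndetic K) (s : ℕ) :
    Syndetic ((· + s) '' K) := by
  obtain ⟨m, hm⟩ := hK
  refine ⟨m + s, fun n => ?_⟩
  obtain ⟨k, hk, hkn⟩ := hm (n - s)
  refine ⟨k + s, mem_image_of_mem _ hk, ?_⟩
  simp only [mem_Icc] at hkn ⊢
  omega

theorem Syndetic.inter_nonempty_of_thick {K S : Set ℕ} (hK : Syndetic K) (hS : Thick S) :
    (K ∩ S).Nonempty := by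
  obtain ⟨m, hm⟩ := hK
  obtain ⟨n, hn⟩ := hS m
  exact (hm n).mono (inter_subset_inter_right _ hn)

section Ergodic

variable {R X : Type*} [Semiring R] [NormedAddCommGroup X] [Module R X]

def hittingTimes (T : X →L[R] X) (U V : Set X) : Set ℕ := {n | (U ∩ (T ^ n) ⁻¹' V).Nonempty}

def TopologicallyErgodic (T : X →L[R] X) : Prop :=
  ∀ U V : Set X, IsOpen U → U.Nonempty → IsOpen V → V.Nonempty → Syndetic (hittingTimes T U V)

theorem ContinuousLinearMap.pow_add_apply (T : X →L[R] X) (m n : ℕ) (x : X) :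
    (T ^ (m + n)) x = (T ^ m) ((T ^ n) x) := by
  rw [pow_add, mul_apply_eq_comp]

theorem exists_ball_pow_mapsTo (T : X →L[R] X) (m : ℕ) {ε : ℝ} (hε : 0 < ε) :
    ∃ δ > 0, ∀ j ≤ m, MapsTo (T ^ j) (ball 0 δ) (ball 0 ε) := by
  have : ∀ᶠ w in 𝓝 (0 : X), ∀ j ∈ Iic m, (T ^ j) w ∈ ball 0 ε :=
    (eventually_all_finite (finite_Iic m)).2 fun j _ =>
      ((T ^ j).continuous.tendsto' 0 0 (map_zero _)).eventually (ball_mem_nhds 0 hε)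
  obtain ⟨δ, hδ, hball⟩ := Metric.eventually_nhds_iff_ball.1 this
  exact ⟨δ, hδ, fun j hj w hw => hball w hw j hj⟩

namespace TopologicallyErgodic

variable {T : X →L[R] X}

theorem denseRange_pow (hT : TopologicallyErgodic T) (s : ℕ) : DenseRange (T ^ s) := by
  refine dense_iff_inter_open.2 fun V hV hV' => ?_
  obtain ⟨m, hm⟩ := hT univ V isOpen_univ univ_nonempty hV hV'
  obtain ⟨n, ⟨u, -, hu⟩, hn⟩ := hm s
  refine ⟨_, hu, (T ^ (n - s)) u, ?_⟩
  rw [← T.pow_add_apply, Nat.add_sub_cancel' hn.1]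

theorem exists_mem_hittingTimes_ball (hT : TopologicallyErgodic T) {A B : Set X}
    (hA : IsOpen A) (hA' : A.Nonempty) (hB : IsOpen B) (hB' : B.Nonempty) (z : X) {η : ℝ}
    (hη : 0 < η) :
    ∃ ν ∈ hittingTimes T A B,
      ν ∈ hittingTimes T (ball z η) (ball 0 η) ∧ ν ∈ hittingTimes T (ball 0 η) (ball z η) := by
  obtain ⟨g, hg⟩ := hT A B hA hA' hB hB'
  obtain ⟨δ', hδ', hδ'T⟩ := exists_ball_pow_mapsTo T g hη
  obtain ⟨g', hg'⟩ := hT (ball 0 δ') (ball z η) isOpen_ball ⟨0, mem_ball_self hδ'⟩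
    isOpen_ball ⟨z, mem_ball_self hη⟩
  obtain ⟨δ, hδ, hδT⟩ := exists_ball_pow_mapsTo T (g + g') hη
  obtain ⟨s, c, hc, hsc⟩ := (hT (ball z η) (ball 0 δ) isOpen_ball ⟨z, mem_ball_self hη⟩
    isOpen_ball ⟨0, mem_ball_self hδ⟩).nonempty
  obtain ⟨n, ⟨w, hw, hnw⟩, hn⟩ := hg' (s + g)
  obtain ⟨ν, hνAB, hν⟩ := hg (n - g)
  simp only [mem_Icc] at hn hν
  -- Now `s ≤ ν ≤ n` with `ν - s ≤ g + g'` and `n - ν ≤ g`: `T ^ ν c = T ^ (ν - s) (T ^ s c)` is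
  -- small, and so is `T ^ (n - ν) w`, whose image under `T ^ ν` is `T ^ n w ∈ ball z η`.
  refine ⟨ν, hνAB, ⟨c, hc, ?_⟩, ⟨(T ^ (n - ν)) w, hδ'T (n - ν) (by omega) hw, ?_⟩⟩
  · have := hδT (ν - s) (by omega) hsc
    rwa [← T.pow_add_apply, Nat.sub_add_cancel (by omega)] at this
  · rwa [mem_preimage, ← T.pow_add_apply, Nat.add_sub_cancel' (by omega)]

theorem hittingTimes_inter_self_nonempty (hT : TopologicallyErgodic T) {A B C : Set X}
    (hA : IsOpen A) (hA' : A.Nonempty) (hB : IsOpen B) (hB' : B.Nonempty) (hC : IsOpen C)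
    (hC' : C.Nonempty) : (hittingTimes T A B ∩ hittingTimes T C C).Nonempty := by
  obtain ⟨z, hz⟩ := hC'
  obtain ⟨ρ, hρ, hball⟩ := Metric.isOpen_iff.1 hC z hz
  have hadd : ∀ a b : X, a ∈ ball z (ρ / 2) → b ∈ ball 0 (ρ / 2) → a + b ∈ C := fun a b ha hb =>
    hball <| by simpa using (dist_add_add_le a b z 0).trans_lt (add_lt_add ha hb)
  obtain ⟨ν, hνAB, ⟨c, hc, hνc⟩, ⟨q, hq, hνq⟩⟩ :=
    hT.exists_mem_hittingTimes_ball hA hA' hB hB' z (half_pos hρ)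
  -- `c` is near `z` and `q` is small, while `T ^ ν` maps `c` near `0` and `q` near `z`.
  refine ⟨ν, hνAB, c + q, hadd c q hc hq, ?_⟩
  rw [mem_preimage, map_add, add_comm]
  exact hadd _ _ hνq hνc

theorem hittingTimes_inter_nonempty (hT : TopologicallyErgodic T) {U₁ V₁ U₂ V₂ : Set X}
    (hU₁ : IsOpen U₁) (hU₁' : U₁.Nonempty) (hV₁ : IsOpen V₁) (hV₁' : V₁.Nonempty)
    (hU₂ : IsOpen U₂) (hU₂' : U₂.Nonempty) (hV₂ : IsOpen V₂) (hV₂' : V₂.Nonempty) :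
    (hittingTimes T U₁ V₁ ∩ hittingTimes T U₂ V₂).Nonempty := by
  obtain ⟨s, hs⟩ := (hT U₂ V₂ hU₂ hU₂' hV₂ hV₂').nonempty
  obtain ⟨ν, ⟨u, hu, huν⟩, ⟨w, hw, hwν⟩⟩ := hT.hittingTimes_inter_self_nonempty hU₁ hU₁'
    (hV₁.preimage (T ^ s).continuous) ((hT.denseRange_pow s).exists_mem_open hV₁ hV₁')
    (hU₂.inter (hV₂.preimage (T ^ s).continuous)) hs
  refine ⟨s + ν, ⟨u, hu, ?_⟩, ⟨w, hw.1, ?_⟩⟩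
  · rw [mem_preimage, T.pow_add_apply]
    exact huν
  · rw [mem_preimage, T.pow_add_apply]
    exact hwν.2

theorem exists_hittingTimes_subset_inter (hT : TopologicallyErgodic T) {U₁ V₁ U₂ V₂ : Set X}
    (hU₁ : IsOpen U₁) (hU₁' : U₁.Nonempty) (hV₁ : IsOpen V₁) (hV₁' : V₁.Nonempty)
    (hU₂ : IsOpen U₂) (hU₂' : U₂.Nonempty) (hV₂ : IsOpen V₂) (hV₂' : V₂.Nonempty) :
    ∃ U V : Set X, IsOpen U ∧ U.Nonempty ∧ IsOpen V ∧ V.Nonempty ∧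
      hittingTimes T U V ⊆ hittingTimes T U₁ V₁ ∩ hittingTimes T U₂ V₂ := by
  obtain ⟨n, hU, hV⟩ := hT.hittingTimes_inter_nonempty hU₁ hU₁' hU₂ hU₂' hV₁ hV₁' hV₂ hV₂'
  refine ⟨U₁ ∩ (T ^ n) ⁻¹' U₂, V₁ ∩ (T ^ n) ⁻¹' V₂, hU₁.inter (hU₂.preimage (T ^ n).continuous),
    hU, hV₁.inter (hV₂.preimage (T ^ n).continuous), hV, ?_⟩
  rintro m ⟨w, ⟨hw₁, hw₂⟩, hwm₁, hwm₂⟩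
  refine ⟨⟨w, hw₁, hwm₁⟩, (T ^ n) w, hw₂, ?_⟩
  rwa [mem_preimage, ← T.pow_add_apply, add_comm, T.pow_add_apply]

theorem exists_hittingTimes_subset_biInter (hT : TopologicallyErgodic T) {ι : Type*}
    (s : Finset ι) {U V : ι → Set X} (hU : ∀ i, IsOpen (U i)) (hU' : ∀ i, (U i).Nonempty)
    (hV : ∀ i, IsOpen (V i)) (hV' : ∀ i, (V i).Nonempty) :
    ∃ U' V' : Set X, IsOpen U' ∧ U'.Nonempty ∧ IsOpen V' ∧ V'.Nonempty ∧
      hittingTimes T U' V' ⊆ ⋂ i ∈ s, hittingTimes T (U i) (V i) := by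
  classical
  induction s using Finset.induction_on with
  | empty => exact ⟨univ, univ, isOpen_univ, univ_nonempty, isOpen_univ, univ_nonempty, by simp⟩
  | insert a s _ ih =>
    obtain ⟨U₁, V₁, hU₁, hU₁', hV₁, hV₁', hsub₁⟩ := ih
    obtain ⟨U₂, V₂, hU₂, hU₂', hV₂, hV₂', hsub₂⟩ :=
      hT.exists_hittingTimes_subset_inter hU₁ hU₁' hV₁ hV₁' (hU a) (hU' a) (hV a) (hV' a)
    refine ⟨U₂, V₂, hU₂, hU₂', hV₂, hV₂', fun n hn => ?_⟩
    rw [Finset.set_biInter_insert]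
    exact ⟨(hsub₂ hn).2, hsub₁ (hsub₂ hn).1⟩

theorem thick_hittingTimes (hT : TopologicallyErgodic T) {U V : Set X} (hU : IsOpen U)
    (hU' : U.Nonempty) (hV : IsOpen V) (hV' : V.Nonempty) : Thick (hittingTimes T U V) := by
  intro L
  obtain ⟨U₁, V₁, hU₁, hU₁', hV₁, hV₁', hsub⟩ := hT.exists_hittingTimes_subset_biInter
    (Finset.range (L + 1)) (U := fun _ => U) (V := fun j => (T ^ j) ⁻¹' V) (fun _ => hU)
    (fun _ => hU') (fun j => hV.preimage (T ^ j).continuous)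
    (fun j => (hT.denseRange_pow j).exists_mem_open hV hV')
  obtain ⟨ν, hν⟩ := (hT U₁ V₁ hU₁ hU₁' hV₁ hV₁').nonempty
  refine ⟨ν, fun n hn => ?_⟩
  simp only [mem_Icc] at hn
  obtain ⟨u, hu, huν⟩ := mem_iInter₂.1 (hsub hν) (n - ν) (Finset.mem_range.2 (by omega))
  refine ⟨u, hu, ?_⟩
  rwa [mem_preimage, ← Nat.sub_add_cancel hn.1, T.pow_add_apply]

end TopologicallyErgodic

end Ergodic

def FinitelyDetermined (𝓕 : Set (Set ℕ)) : Prop :=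
  ∀ A ∈ 𝓕, ∃ F : Finset ℕ, ∀ B : Set ℕ, A ∩ ↑F ⊆ B → B ∈ 𝓕

theorem FinitelyDetermined.mem_of_subset {𝓕 : Set (Set ℕ)} (h𝓕 : FinitelyDetermined 𝓕)
    {A B : Set ℕ} (hA : A ∈ 𝓕) (hAB : A ⊆ B) : B ∈ 𝓕 := by
  obtain ⟨F, hF⟩ := h𝓕 A hA
  exact hF B (inter_subset_left.trans hAB)

theorem shiftSet_comm (A : Set ℕ) (j k : ℕ) :
    shiftSet (shiftSet A j) k = shiftSet (shiftSet A k) j := by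
  ext n
  simp only [shiftSet, mem_ofPred_eq, add_right_comm]

section ReturnSets

variable {X : Type*} [NormedAddCommGroup X] [NormedSpace ℂ X] {T : X →L[ℂ] X} {x : X}

theorem mem_HCSet_iff : x ∈ HCSet T ↔ ∀ W, IsOpen W → W.Nonempty → (retSet T x W).Nonempty := by
  refine dense_iff_inter_open.trans (forall₃_congr fun W _ _ => ?_)
  rw [inter_comm, ← image_univ, image_inter_nonempty_iff, univ_inter]
  rfl

theorem retSet_pow_apply (p : ℕ) (U : Set X) :
    retSet T ((T ^ p) x) U = shiftSet (retSet T x U) p := by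
  ext n
  simp only [retSet, shiftSet, mem_ofPred_eq, T.pow_add_apply]

theorem retSet_prodMap (a b : X) (U V : Set X) :
    retSet (T.prodMap T) (a, b) (U ×ˢ V) = retSet T a U ∩ retSet T b V := by
  have hpow : ∀ n, (T.prodMap T) ^ n = (T ^ n).prodMap (T ^ n) := by
    intro n
    induction n with
    | zero => rfl
    | succ n ih =>
      rw [pow_succ, ih, pow_succ]
      exact ContinuousLinearMap.ext fun _ => rfl
  ext n
  simp only [retSet, hpow, mem_ofPred_eq]
  rfl

theorem isOpen_setOf_retSet_mem (T : X →L[ℂ] X) {V : Set X} (hV : IsOpen V) {𝓕 : Set (Set ℕ)}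
    (h𝓕 : FinitelyDetermined 𝓕) : IsOpen {y | retSet T y V ∈ 𝓕} := by
  refine isOpen_iff_mem_nhds.2 fun y hy => ?_
  obtain ⟨F, hF⟩ := h𝓕 _ hy
  have : ∀ᶠ w in 𝓝 y, ∀ n ∈ retSet T y V ∩ ↑F, (T ^ n) w ∈ V :=
    (eventually_all_finite (F.finite_toSet.subset inter_subset_right)).2 fun n hn =>
      (T ^ n).continuous.continuousAt (hV.mem_nhds hn.1)
  exact this.mono fun w hw => hF _ hw

theorem hittingTimes_nonempty (hx : ∀ p, (T ^ p) x ∈ HCSet T) {U V : Set X} (hU : IsOpen U)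
    (hU' : U.Nonempty) (hV : IsOpen V) (hV' : V.Nonempty) : (hittingTimes T U V).Nonempty := by
  obtain ⟨p, hp⟩ := mem_HCSet_iff.1 (by simpa using hx 0) U hU hU'
  obtain ⟨r, hr⟩ := mem_HCSet_iff.1 (hx p) V hV hV'
  exact ⟨r, _, hp, hr⟩

theorem mem_hittingTimes_of_mem_retSet_inter {U V : Set X} {p r : ℕ}
    (h : p ∈ retSet T x U ∩ shiftSet (retSet T x V) r) : r ∈ hittingTimes T U V := by
  refine ⟨(T ^ p) x, h.1, ?_⟩
  rw [mem_preimage, ← T.pow_add_apply, add_comm]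
  exact h.2

theorem exists_syndetic_retSet_inter_shiftSet_mem {D : Type*} {𝒜 : Set (Set ℕ)}
    {Adelta : D → Set (Set ℕ)} (hx : ∀ W, IsOpen W → W.Nonempty → retSet T x W ∈ 𝒜)
    (h2 : ∀ A ∈ 𝒜, ∃ δ, Syndetic {k | A ∩ shiftSet A k ∈ Adelta δ})
    (hmono : ∀ δ, ∀ A ∈ Adelta δ, ∀ B, A ⊆ B → B ∈ Adelta δ) {U V : Set X} (hU : IsOpen U)
    (hV : IsOpen V) {s : ℕ} (hs : s ∈ hittingTimes T U V) :
    ∃ δ, Syndetic {r | retSet T x U ∩ shiftSet (retSet T x V) r ∈ Adelta δ} := by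
  obtain ⟨δ, hδ⟩ := h2 _ (hx _ (hU.inter (hV.preimage (T ^ s).continuous)) hs)
  refine ⟨δ, (hδ.image_add s).mono ?_⟩
  rintro _ ⟨k, hk, rfl⟩
  refine hmono δ _ hk _ fun n hn => ⟨hn.1.1, ?_⟩
  have hnk : (T ^ s) ((T ^ (n + k)) x) ∈ V := hn.2.2
  rwa [← T.pow_add_apply, add_comm, add_assoc] at hnk

theorem exists_retSet_prodMap_mem {𝓑 : Set (Set ℕ)} (hT : TopologicallyErgodic T)
    (hx : x ∈ HCSet T) {U V : Set X}
    (hK : Syndetic {r | ∀ p, shiftSet (retSet T x U ∩ shiftSet (retSet T x V) r) p ∈ 𝓑})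
    {O : Set (X × X)} (hO : IsOpen O) (hO' : O.Nonempty) :
    ∃ z ∈ O, retSet (T.prodMap T) z (U ×ˢ V) ∈ 𝓑 := by
  obtain ⟨⟨a, b⟩, hab⟩ := hO'
  obtain ⟨O₁, O₂, hO₁, hO₂, ha, hb, hsub⟩ := isOpen_prod_iff.1 hO a b hab
  obtain ⟨r, hrK, hr⟩ := hK.inter_nonempty_of_thick (hT.thick_hittingTimes hO₁ ⟨a, ha⟩ hO₂ ⟨b, hb⟩)
  obtain ⟨p, hp₁, hp₂⟩ := mem_HCSet_iff.1 hx _ (hO₁.inter (hO₂.preimage (T ^ r).continuous)) hr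
  refine ⟨((T ^ p) x, (T ^ r) ((T ^ p) x)), hsub ⟨hp₁, hp₂⟩, ?_⟩
  rw [retSet_prodMap, retSet_pow_apply, retSet_pow_apply, retSet_pow_apply, shiftSet_comm]
  exact hrK p

end ReturnSets

theorem AHC.of_isTopologicalBasis {D M : Type*} [Countable M] {fam : D → M → Set (Set ℕ)}
    {Adelta : D → Set (Set ℕ)} {𝒜 : Set (Set ℕ)} (hAdelta : ∀ δ, Adelta δ = ⋂ μ, fam δ μ)
    (h𝒜 : 𝒜 = ⋃ δ, Adelta δ) (hup : ∀ A B : Set ℕ, A ∈ 𝒜 → A ⊆ B → B ∈ 𝒜)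
    (hi : ∀ δ μ, FinitelyDetermined (fam δ μ)) {Y : Type*} [NormedAddCommGroup Y]
    [NormedSpace ℂ Y] [BaireSpace Y] [SecondCountableTopology Y] {S : Y →L[ℂ] Y}
    {𝓤 : Set (Set Y)} (h𝓤 : IsTopologicalBasis 𝓤)
    (hS : ∀ V ∈ 𝓤, V.Nonempty →
      ∃ δ, ∀ O, IsOpen O → O.Nonempty → ∃ y ∈ O, retSet S y V ∈ Adelta δ) :
    AHC 𝒜 S := by
  obtain ⟨𝓥, h𝓥𝓤, h𝓥c, h𝓥⟩ := h𝓤.exists_countable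
  let ι := {V : Set Y // V ∈ 𝓥 ∧ V.Nonempty}
  have : Countable ι := (h𝓥c.mono fun _ hV => hV.1).to_subtype
  choose δ hδ using fun V : ι => hS V.1 (h𝓥𝓤 V.2.1) V.2.2
  have hdense : Dense (⋂ i : ι × M, {y | retSet S y i.1.1 ∈ fam (δ i.1) i.2}) := by
    refine dense_iInter_of_isOpen (fun i => isOpen_setOf_retSet_mem S (h𝓥.isOpen i.1.2.1)
      (hi _ _)) fun i => dense_iff_inter_open.2 fun O hO hO' => ?_
    obtain ⟨y, hyO, hy⟩ := hδ i.1 O hO hO'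
    exact ⟨y, hyO, by rw [hAdelta] at hy; exact mem_iInter.1 hy i.2⟩
  obtain ⟨y, hy⟩ := hdense.nonempty
  refine ⟨y, fun W hW ⟨w, hw⟩ => ?_⟩
  obtain ⟨V, hV𝓥, hwV, hVW⟩ := h𝓥.exists_subset_of_mem_open hw hW
  have hyV : retSet S y V ∈ Adelta (δ ⟨V, hV𝓥, w, hwV⟩) := by
    rw [hAdelta]
    exact mem_iInter.2 fun μ => mem_iInter.1 hy (⟨V, hV𝓥, w, hwV⟩, μ)
  exact hup _ _ (h𝒜 ▸ mem_iUnion.2 ⟨_, hyV⟩) fun n hn => hVW hn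

theorem stmt_8_general {D : Type*} {M : Type*} [Countable M]
    (fam : D → M → Set (Set ℕ)) (Adelta : D → Set (Set ℕ)) (𝒜 : Set (Set ℕ))
    (hAdelta : ∀ δ : D, Adelta δ = ⋂ μ : M, fam δ μ)
    (h𝒜 : 𝒜 = ⋃ δ : D, Adelta δ)
    (hempty : ∅ ∉ 𝒜)
    (hup : ∀ A B : Set ℕ, A ∈ 𝒜 → A ⊆ B → B ∈ 𝒜)
    (hi : ∀ (δ : D) (μ : M), ∀ A ∈ fam δ μ, ∃ F : Finset ℕ,
      ∀ B : Set ℕ, A ∩ ↑F ⊆ B → B ∈ fam δ μ)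
    (hii : ∀ A ∈ 𝒜, ∃ δ : D, ∀ n : ℕ, shiftSet A n ∈ Adelta δ)
    (h1 : ∀ δ' : D, ∃ δ : D, ∀ k : ℕ, ∀ A ∈ Adelta δ', shiftSet A k ∈ Adelta δ)
    (h2 : ∀ A ∈ 𝒜, ∃ δ : D, Syndetic {k : ℕ | A ∩ shiftSet A k ∈ Adelta δ})
    {X : Type*} [NormedAddCommGroup X] [NormedSpace ℂ X] [CompleteSpace X]
    [TopologicalSpace.SeparableSpace X]
    (T : X →L[ℂ] X) (hT : AHC 𝒜 T) :
    AHC 𝒜 (T.prodMap T) := by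
  obtain ⟨x, hx⟩ := hT
  have hAne : ∀ δ, ∀ A ∈ Adelta δ, A.Nonempty := fun δ A hA =>
    nonempty_iff_ne_empty.2 fun h => hempty (h𝒜 ▸ mem_iUnion.2 ⟨δ, h ▸ hA⟩)
  have hmono : ∀ δ, ∀ A ∈ Adelta δ, ∀ B, A ⊆ B → B ∈ Adelta δ := fun δ A hA B hAB => by
    rw [hAdelta] at hA ⊢
    exact mem_iInter.2 fun μ => FinitelyDetermined.mem_of_subset (hi δ μ) (mem_iInter.1 hA μ) hAB
  have htail : ∀ p, (T ^ p) x ∈ HCSet T := fun p => mem_HCSet_iff.2 fun W hW hW' => by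
    obtain ⟨δ, hδ⟩ := hii _ (hx W hW hW')
    rw [retSet_pow_apply]
    exact hAne δ _ (hδ p)
  have hK : ∀ U V, IsOpen U → U.Nonempty → IsOpen V → V.Nonempty →
      ∃ δ, Syndetic {r | retSet T x U ∩ shiftSet (retSet T x V) r ∈ Adelta δ} :=
    fun U V hU hU' hV hV' => exists_syndetic_retSet_inter_shiftSet_mem hx h2 hmono hU hV
      (hittingTimes_nonempty htail hU hU' hV hV').some_mem
  have hT : TopologicallyErgodic T := fun U V hU hU' hV hV' => by
    obtain ⟨δ, hδ⟩ := hK U V hU hU' hV hV'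
    exact hδ.mono fun r hr => mem_hittingTimes_of_mem_retSet_inter (hAne δ _ hr).some_mem
  have : SecondCountableTopology X := UniformSpace.secondCountable_of_separable X
  refine AHC.of_isTopologicalBasis hAdelta h𝒜 hup hi
    (isTopologicalBasis_opens.prod isTopologicalBasis_opens) ?_
  rintro _ ⟨U, hU, V, hV, rfl⟩ hUV
  obtain ⟨δ, hδ⟩ := hK U V hU hUV.fst hV hUV.snd
  obtain ⟨δ', hδ'⟩ := h1 δ
  exact ⟨δ', fun O hO hO' => exists_retSet_prodMap_mem hT (by simpa using htail 0)
    (hδ.mono fun r hr p => hδ' p _ hr) hO hO'⟩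

/-- If `𝒜 = ⋃_δ 𝒜_δ` is an upper Furstenberg family satisfying the two shift/syndeticity
conditions, and `T` is `𝒜`-hypercyclic, then `T × T` is `𝒜`-hypercyclic. -/
theorem stmt_8 {D : Type*} {M : Type*} [Countable M]
    (fam : D → M → Set (Set ℕ)) (Adelta : D → Set (Set ℕ)) (𝒜 : Set (Set ℕ))
    (hAdelta : ∀ δ : D, Adelta δ = ⋂ μ : M, fam δ μ)
    (h𝒜 : 𝒜 = ⋃ δ : D, Adelta δ)
    (hne : 𝒜.Nonempty) (hempty : ∅ ∉ 𝒜)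
    (hup : ∀ A B : Set ℕ, A ∈ 𝒜 → A ⊆ B → B ∈ 𝒜)
    (hi : ∀ (δ : D) (μ : M), ∀ A ∈ fam δ μ, ∃ F : Finset ℕ,
      ∀ B : Set ℕ, A ∩ ↑F ⊆ B → B ∈ fam δ μ)
    (hii : ∀ A ∈ 𝒜, ∃ δ : D, ∀ n : ℕ, shiftSet A n ∈ Adelta δ)
    (h1 : ∀ δ' : D, ∃ δ : D, ∀ k : ℕ, ∀ A ∈ Adelta δ', shiftSet A k ∈ Adelta δ)
    (h2 : ∀ A ∈ 𝒜, ∃ δ : D, Syndetic {k : ℕ | A ∩ shiftSet A k ∈ Adelta δ})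
    {X : Type*} [NormedAddCommGroup X] [NormedSpace ℂ X] [CompleteSpace X]
    [TopologicalSpace.SeparableSpace X] (hX : ¬FiniteDimensional ℂ X)
    (T : X →L[ℂ] X) (hT : AHC 𝒜 T) :
    AHC 𝒜 (T.prodMap T) :=
  stmt_8_general fam Adelta 𝒜 hAdelta h𝒜 hempty hup hi hii h1 h2 T hT
end
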